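/- If a real random variable Z is symmetric (i.e., Z and −Z have the same distribution) and bounded, then for all λ ∈ ℝ, E[exp(λZ)] ≤ E[exp(λ²Z²/2)]. -/

import Mathlib

/-!
Since `Z` and `-Z` have the same law, `E[exp(λZ)] = E[exp(-λZ)]`, so `E[exp(λZ)]` equals the mean
`E[cosh(λZ)]` of the two; conclude with the pointwise bound `cosh x ≤ exp(x² / 2)`.
-/

open MeasureTheory Real

section Symmetric

variable {Ω G E : Type*} [MeasurableSpace Ω] {μ : Measure Ω} [MeasurableSpace G] [Neg G]
  [MeasurableNeg G] {Z : Ω → G} [NormedAddCommGroup E] {g : G → E}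

lemma integrable_comp_neg_of_map_eq_map_neg (hZ : AEMeasurable Z μ)
    (hsymm : μ.map Z = μ.map (fun ω => -Z ω)) (hg : AEStronglyMeasurable g (μ.map Z))
    (hint : Integrable (fun ω => g (Z ω)) μ) : Integrable (fun ω => g (-Z ω)) μ :=
  (hsymm ▸ (integrable_map_measure hg hZ).2 hint).comp_aemeasurable hZ.neg

lemma integral_comp_neg_of_map_eq_map_neg [NormedSpace ℝ E] (hZ : AEMeasurable Z μ)
    (hsymm : μ.map Z = μ.map (fun ω => -Z ω)) (hg : AEStronglyMeasurable g (μ.map Z)) :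
    ∫ ω, g (-Z ω) ∂μ = ∫ ω, g (Z ω) ∂μ := by
  rw [← integral_map (φ := fun ω => -Z ω) hZ.neg (hsymm ▸ hg), ← hsymm, integral_map hZ hg]

end Symmetric

section Real

variable {Ω : Type*} [MeasurableSpace Ω] {μ : Measure Ω} {Z : Ω → ℝ}

lemma integral_exp_mul_eq_integral_cosh_mul (hZ : AEMeasurable Z μ)
    (hsymm : μ.map Z = μ.map (fun ω => -Z ω)) (l : ℝ)
    (hint : Integrable (fun ω => exp (l * Z ω)) μ) :
    ∫ ω, exp (l * Z ω) ∂μ = ∫ ω, cosh (l * Z ω) ∂μ := by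
  have hg : AEStronglyMeasurable (fun x => exp (l * x)) (μ.map Z) :=
    (by fun_prop : Continuous fun x => exp (l * x)).aestronglyMeasurable
  have hint_neg := integrable_comp_neg_of_map_eq_map_neg hZ hsymm hg hint
  have heq := integral_comp_neg_of_map_eq_map_neg hZ hsymm hg
  simp only [mul_neg] at hint_neg heq
  simp only [cosh_eq]
  rw [integral_div, integral_add hint hint_neg, heq]
  ring

lemma integrable_comp_of_abs_le [IsFiniteMeasure μ] {E : Type*} [NormedAddCommGroup E]
    (hZ : AEMeasurable Z μ) {C : ℝ} (hC : ∀ ω, |Z ω| ≤ C) {g : ℝ → E} (hg : Continuous g) :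
    Integrable (fun ω => g (Z ω)) μ := by
  obtain ⟨M, hM⟩ := (isCompact_Icc (a := -C) (b := C)).exists_bound_of_continuousOn hg.continuousOn
  exact .of_bound (hg.comp_aestronglyMeasurable hZ.aestronglyMeasurable) M
    (.of_forall fun ω => hM _ (abs_le.1 (hC ω)))

end Real

/-- Symmetrization: if `Z` is a symmetric, bounded real random variable, then for all
`λ ∈ ℝ`, `E[exp(λ Z)] ≤ E[exp(λ² Z² / 2)]`. -/
theorem stmt14 {Ω : Type*} [MeasurableSpace Ω] (μ : Measure Ω) [IsProbabilityMeasure μ]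
    (Z : Ω → ℝ) (hZ : Measurable Z)
    (hsymm : Measure.map Z μ = Measure.map (fun ω => -Z ω) μ)
    (hbdd : ∃ C : ℝ, ∀ ω, |Z ω| ≤ C) :
    ∀ l : ℝ, ∫ ω, Real.exp (l * Z ω) ∂μ ≤ ∫ ω, Real.exp (l ^ 2 * Z ω ^ 2 / 2) ∂μ := by
  obtain ⟨C, hC⟩ := hbdd
  intro l
  have hint {g : ℝ → ℝ} (hg : Continuous g) : Integrable (fun ω => g (Z ω)) μ :=
    integrable_comp_of_abs_le hZ.aemeasurable hC hg
  calc ∫ ω, exp (l * Z ω) ∂μ = ∫ ω, cosh (l * Z ω) ∂μ :=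
        integral_exp_mul_eq_integral_cosh_mul hZ.aemeasurable hsymm l
          (hint (g := fun x => exp (l * x)) (by fun_prop))
    _ ≤ ∫ ω, exp (l ^ 2 * Z ω ^ 2 / 2) ∂μ :=
        integral_mono (hint (g := fun x => cosh (l * x)) (by fun_prop))
          (hint (g := fun x => exp (l ^ 2 * x ^ 2 / 2)) (by fun_prop)) fun ω => by
          simpa only [mul_pow] using cosh_le_exp_half_sq (l * Z ω)
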